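/- (Error bound of Theorem 1.) Let m, ℓ ∈ ℕ and let p, p_Z ≥ 0 with p + p_Z ≤ 1/2 and p + p_Z > 0. Suppose d, d⁰ : ({-1,0,1}^m) → ℝ satisfy |d_ω| ≤ (1 - 2p - 2p_Z)^{|ω|}·|d⁰_ω| for every frequency vector ω, and Σ_ω 2^{-|ω|} (d⁰_ω)² ≤ 1. Define f(θ) = Σ_ω d_ω Φ_ω(θ) and its low-weight truncation g(θ) = Σ_{|ω| ≤ ℓ} d_ω Φ_ω(θ). Then Δ(f,g) ≤ (1 - 2p - 2p_Z)^{ℓ+1} and moreover Δ(f,g) ≤ exp(-2(p + p_Z)·ℓ). -/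

import Mathlib

open MeasureTheory Finset

/-- The trigonometric monomial factor: `φ₀ = 1`, `φ₁ = cos`, `φ₋₁ = sin`. -/
noncomputable def phi (w : ℤ) (x : ℝ) : ℝ :=
  if w = 1 then Real.cos x else if w = -1 then Real.sin x else 1

/-- The multivariate trigonometric monomial `Φ_ω(θ) = ∏ i, φ_{ω i}(θ i)`. -/
noncomputable def Phi {m : ℕ} (ω : Fin m → ℤ) (θ : Fin m → ℝ) : ℝ :=
  ∏ i, phi (ω i) (θ i)

/-- The weight `|ω|` of a frequency vector: the number of nonzero entries. -/
def wt {m : ℕ} (ω : Fin m → ℤ) : ℕ := (Finset.univ.filter fun i => ω i ≠ 0).card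

/-- The finite set of all frequency vectors `ω ∈ {-1,0,1}^m`. -/
def freqSet (m : ℕ) : Finset (Fin m → ℤ) :=
  Fintype.piFinset fun _ => ({-1, 0, 1} : Finset ℤ)

/-- The mean of a function over the cube `[0, 2π]^m`. -/
noncomputable def cubeMean (m : ℕ) (h : (Fin m → ℝ) → ℝ) : ℝ :=
  ((2 * Real.pi) ^ m)⁻¹ *
    ∫ θ in Set.Icc (0 : Fin m → ℝ) (fun _ => 2 * Real.pi), h θ

/-- The average `L²` distance `Δ(f,g)` over the parameter cube `[0, 2π]^m`. -/
noncomputable def Delta (m : ℕ) (f g : (Fin m → ℝ) → ℝ) : ℝ :=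
  Real.sqrt (cubeMean m fun θ => (f θ - g θ) ^ 2)

/-! The monomials `Φ_ω`, `ω ∈ {-1,0,1}^m`, are orthogonal on the cube `[0, 2π]^m` with mean
square `2^{-|ω|}`: by Fubini this reduces to the one-dimensional integrals of `cos²`, `sin²` and
`sin · cos` over a period. Hence `Δ(f,g)² = Σ_{|ω|>ℓ} 2^{-|ω|} d_ω²`, and since every such `ω` has
`|ω| ≥ ℓ + 1`, each term is at most `(1 - 2p - 2p_Z)^{2(ℓ+1)} 2^{-|ω|} (d⁰_ω)²`. The exponential
bound is `1 - x ≤ e^{-x}`. -/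

theorem setIntegral_Icc_pi_prod {ι : Type*} [Fintype ι] (a b : ι → ℝ) (f : ι → ℝ → ℝ) :
    ∫ θ in Set.Icc a b, ∏ i, f i (θ i) = ∏ i, ∫ x in Set.Icc (a i) (b i), f i x := by
  rw [← Set.pi_univ_Icc, volume_pi, Measure.restrict_pi_pi, integral_fintype_prod_eq_prod]

lemma continuous_phi (w : ℤ) : Continuous (phi w) := by
  unfold phi; split_ifs <;> fun_prop

lemma continuous_Phi {m : ℕ} (ω : Fin m → ℤ) : Continuous (Phi ω) :=
  continuous_finsetProd _ fun i _ => (continuous_phi (ω i)).comp (continuous_apply i)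

lemma integral_phi_mul_phi {a b : ℤ} (ha : a ∈ ({-1, 0, 1} : Finset ℤ))
    (hb : b ∈ ({-1, 0, 1} : Finset ℤ)) :
    ∫ x in Set.Icc 0 (2 * Real.pi), phi a x * phi b x
      = if a = b then 2 * Real.pi * (if a = 0 then 1 else 2⁻¹) else 0 := by
  have hcos_sin : ∫ x in (0:ℝ)..2 * Real.pi, Real.cos x * Real.sin x = 0 := by
    simp_rw [mul_comm (Real.cos _)]
    simp [integral_sin_mul_cos₁]
  rw [integral_Icc_eq_integral_Ioc, ← intervalIntegral.integral_of_le (by positivity)]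
  fin_cases ha <;> fin_cases hb <;>
    simp [phi, ← sq, integral_cos_sq, integral_sin_sq, integral_sin_mul_cos₁, hcos_sin] <;> ring

lemma prod_ite_eq_zero_one_eq_pow_wt {M : Type*} [CommMonoid M] {m : ℕ} (ω : Fin m → ℤ)
    (c : M) : ∏ i, (if ω i = 0 then 1 else c) = c ^ wt ω := by
  rw [Finset.prod_ite, Finset.prod_const_one, one_mul, Finset.prod_const]
  rfl

lemma integral_Phi_mul_Phi {m : ℕ} {ω ω' : Fin m → ℤ} (hω : ω ∈ freqSet m)
    (hω' : ω' ∈ freqSet m) :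
    ∫ θ in Set.Icc (0 : Fin m → ℝ) (fun _ => 2 * Real.pi), Phi ω θ * Phi ω' θ
      = if ω = ω' then (2 * Real.pi) ^ m * ((2 : ℝ) ^ wt ω)⁻¹ else 0 := by
  have hmem := Fintype.mem_piFinset.mp hω
  have hmem' := Fintype.mem_piFinset.mp hω'
  simp_rw [Phi, ← Finset.prod_mul_distrib]
  rw [setIntegral_Icc_pi_prod _ _ fun i x => phi (ω i) x * phi (ω' i) x]
  simp only [Pi.zero_apply, integral_phi_mul_phi (hmem _) (hmem' _)]
  split_ifs with h
  · subst h
    simp only [if_true, Finset.prod_mul_distrib, Finset.prod_const, Finset.card_univ,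
      Fintype.card_fin, prod_ite_eq_zero_one_eq_pow_wt, inv_pow]
    ring
  · obtain ⟨i, hi⟩ := Function.ne_iff.mp h
    exact Finset.prod_eq_zero (Finset.mem_univ i) (if_neg hi)

theorem cubeMean_sum_mul_Phi_sq {m : ℕ} (d : (Fin m → ℤ) → ℝ) {S : Finset (Fin m → ℤ)}
    (hS : S ⊆ freqSet m) :
    cubeMean m (fun θ => (∑ ω ∈ S, d ω * Phi ω θ) ^ 2)
      = ∑ ω ∈ S, d ω ^ 2 * ((2 : ℝ) ^ wt ω)⁻¹ := by
  have hint : ∀ ω ω', IntegrableOn (fun θ => d ω * d ω' * (Phi ω θ * Phi ω' θ))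
      (Set.Icc (0 : Fin m → ℝ) (fun _ => 2 * Real.pi)) := fun ω ω' =>
    (continuous_const.mul ((continuous_Phi ω).mul (continuous_Phi ω'))).integrableOn_Icc
  have hsq : ∀ θ, (∑ ω ∈ S, d ω * Phi ω θ) ^ 2
      = ∑ ω ∈ S, ∑ ω' ∈ S, d ω * d ω' * (Phi ω θ * Phi ω' θ) := fun θ => by
    rw [sq, Finset.sum_mul_sum]
    exact Finset.sum_congr rfl fun _ _ => Finset.sum_congr rfl fun _ _ => by ring
  have hpi : (2 * Real.pi) ^ m ≠ 0 := by positivity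
  simp_rw [cubeMean, hsq]
  rw [integral_finsetSum _ fun ω _ => integrable_finsetSum _ fun ω' _ => hint ω ω',
    Finset.mul_sum]
  refine Finset.sum_congr rfl fun ω hω => ?_
  rw [integral_finsetSum _ fun ω' _ => hint ω ω']
  have horth : ∀ ω' ∈ S, ∫ θ in Set.Icc (0 : Fin m → ℝ) (fun _ => 2 * Real.pi),
      d ω * d ω' * (Phi ω θ * Phi ω' θ)
        = if ω = ω' then d ω * d ω * ((2 * Real.pi) ^ m * ((2 : ℝ) ^ wt ω)⁻¹) else 0 :=
    fun ω' hω' => by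
      rw [integral_const_mul, integral_Phi_mul_Phi (hS hω) (hS hω')]
      split_ifs with h <;> simp [h]
  rw [Finset.sum_congr rfl horth, Finset.sum_ite_eq, if_pos hω]
  field_simp

theorem Delta_sum_sum_filter {m : ℕ} (d : (Fin m → ℤ) → ℝ) (P : (Fin m → ℤ) → Prop)
    [DecidablePred P] :
    Delta m (fun θ => ∑ ω ∈ freqSet m, d ω * Phi ω θ)
        (fun θ => ∑ ω ∈ (freqSet m).filter P, d ω * Phi ω θ)
      = Real.sqrt (∑ ω ∈ (freqSet m).filter (fun ω => ¬ P ω), d ω ^ 2 * ((2 : ℝ) ^ wt ω)⁻¹) := by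
  rw [Delta, ← cubeMean_sum_mul_Phi_sq d (Finset.filter_subset _ _)]
  congr 2 with θ
  rw [← Finset.sum_filter_add_sum_filter_not (freqSet m) P]
  ring

lemma sum_filter_wt_gt_le {m ℓ : ℕ} {q : ℝ} (hq0 : 0 ≤ q) (hq1 : q ≤ 1)
    {d d0 : (Fin m → ℤ) → ℝ} (hd : ∀ ω ∈ freqSet m, |d ω| ≤ q ^ wt ω * |d0 ω|)
    (hd0 : ∑ ω ∈ freqSet m, ((2 : ℝ) ^ wt ω)⁻¹ * d0 ω ^ 2 ≤ 1) :
    ∑ ω ∈ (freqSet m).filter (fun ω => ¬ wt ω ≤ ℓ), d ω ^ 2 * ((2 : ℝ) ^ wt ω)⁻¹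
      ≤ (q ^ (ℓ + 1)) ^ 2 := by
  have hterm : ∀ ω ∈ (freqSet m).filter (fun ω => ¬ wt ω ≤ ℓ),
      d ω ^ 2 * ((2 : ℝ) ^ wt ω)⁻¹ ≤ (q ^ (ℓ + 1)) ^ 2 * (((2 : ℝ) ^ wt ω)⁻¹ * d0 ω ^ 2) := by
    intro ω hω
    obtain ⟨hωm, hwt⟩ := Finset.mem_filter.mp hω
    have habs : |d ω| ≤ q ^ (ℓ + 1) * |d0 ω| :=
      (hd ω hωm).trans (mul_le_mul_of_nonneg_right
        (pow_le_pow_of_le_one hq0 hq1 (by omega)) (abs_nonneg _))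
    have hsq : d ω ^ 2 ≤ (q ^ (ℓ + 1)) ^ 2 * d0 ω ^ 2 := by
      simpa only [sq_abs, mul_pow] using pow_le_pow_left₀ (abs_nonneg _) habs 2
    calc d ω ^ 2 * ((2 : ℝ) ^ wt ω)⁻¹ ≤ (q ^ (ℓ + 1)) ^ 2 * d0 ω ^ 2 * ((2 : ℝ) ^ wt ω)⁻¹ := by
          gcongr
      _ = _ := by ring
  calc _ ≤ ∑ ω ∈ (freqSet m).filter (fun ω => ¬ wt ω ≤ ℓ),
        (q ^ (ℓ + 1)) ^ 2 * (((2 : ℝ) ^ wt ω)⁻¹ * d0 ω ^ 2) := Finset.sum_le_sum hterm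
    _ = (q ^ (ℓ + 1)) ^ 2 * ∑ ω ∈ (freqSet m).filter (fun ω => ¬ wt ω ≤ ℓ),
        ((2 : ℝ) ^ wt ω)⁻¹ * d0 ω ^ 2 := (Finset.mul_sum _ _ _).symm
    _ ≤ (q ^ (ℓ + 1)) ^ 2 * ∑ ω ∈ freqSet m, ((2 : ℝ) ^ wt ω)⁻¹ * d0 ω ^ 2 := by
        gcongr
        exact Finset.filter_subset _ _
    _ ≤ (q ^ (ℓ + 1)) ^ 2 := mul_le_of_le_one_right (sq_nonneg _) hd0

lemma one_sub_two_mul_pow_succ_le_exp {s : ℝ} (hs0 : 0 ≤ s) (hs : s ≤ 1 / 2) (ℓ : ℕ) :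
    (1 - 2 * s) ^ (ℓ + 1) ≤ Real.exp (-2 * s * ℓ) :=
  calc (1 - 2 * s) ^ (ℓ + 1) ≤ (1 - 2 * s) ^ ℓ :=
        pow_le_pow_of_le_one (by linarith) (by linarith) ℓ.le_succ
    _ ≤ Real.exp (-2 * s) ^ ℓ :=
        pow_le_pow_left₀ (by linarith) (by linarith [Real.add_one_le_exp (-2 * s)]) ℓ
    _ = Real.exp (-2 * s * ℓ) := by rw [← Real.exp_nat_mul, mul_comm]

theorem stmt4_general (m ℓ : ℕ) (p pZ : ℝ)
    (hsum : p + pZ ≤ 1 / 2) (hpos : 0 < p + pZ)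
    (d d0 : (Fin m → ℤ) → ℝ)
    (hd : ∀ ω ∈ freqSet m, |d ω| ≤ (1 - 2 * p - 2 * pZ) ^ wt ω * |d0 ω|)
    (hd0 : ∑ ω ∈ freqSet m, ((2 : ℝ) ^ wt ω)⁻¹ * d0 ω ^ 2 ≤ 1) :
    Delta m (fun θ => ∑ ω ∈ freqSet m, d ω * Phi ω θ)
        (fun θ => ∑ ω ∈ (freqSet m).filter (fun ω => wt ω ≤ ℓ), d ω * Phi ω θ) ≤
        (1 - 2 * p - 2 * pZ) ^ (ℓ + 1) ∧
      Delta m (fun θ => ∑ ω ∈ freqSet m, d ω * Phi ω θ)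
        (fun θ => ∑ ω ∈ (freqSet m).filter (fun ω => wt ω ≤ ℓ), d ω * Phi ω θ) ≤
        Real.exp (-2 * (p + pZ) * ℓ) := by
  have hq : 1 - 2 * p - 2 * pZ = 1 - 2 * (p + pZ) := by ring
  have hq0 : 0 ≤ 1 - 2 * p - 2 * pZ := by linarith
  have hΔ : Delta m (fun θ => ∑ ω ∈ freqSet m, d ω * Phi ω θ)
      (fun θ => ∑ ω ∈ (freqSet m).filter (fun ω => wt ω ≤ ℓ), d ω * Phi ω θ)
        ≤ (1 - 2 * p - 2 * pZ) ^ (ℓ + 1) := by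
    rw [Delta_sum_sum_filter, ← Real.sqrt_sq (pow_nonneg hq0 _)]
    exact Real.sqrt_le_sqrt (sum_filter_wt_gt_le hq0 (by linarith) hd hd0)
  refine ⟨hΔ, hΔ.trans ?_⟩
  rw [hq]
  exact one_sub_two_mul_pow_succ_le_exp hpos.le hsum ℓ

theorem stmt4 (m ℓ : ℕ) (p pZ : ℝ) (hp : 0 ≤ p) (hpZ : 0 ≤ pZ)
    (hsum : p + pZ ≤ 1 / 2) (hpos : 0 < p + pZ)
    (d d0 : (Fin m → ℤ) → ℝ)
    (hd : ∀ ω ∈ freqSet m, |d ω| ≤ (1 - 2 * p - 2 * pZ) ^ wt ω * |d0 ω|)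
    (hd0 : ∑ ω ∈ freqSet m, ((2 : ℝ) ^ wt ω)⁻¹ * d0 ω ^ 2 ≤ 1) :
    Delta m (fun θ => ∑ ω ∈ freqSet m, d ω * Phi ω θ)
        (fun θ => ∑ ω ∈ (freqSet m).filter (fun ω => wt ω ≤ ℓ), d ω * Phi ω θ) ≤
        (1 - 2 * p - 2 * pZ) ^ (ℓ + 1) ∧
      Delta m (fun θ => ∑ ω ∈ freqSet m, d ω * Phi ω θ)
        (fun θ => ∑ ω ∈ (freqSet m).filter (fun ω => wt ω ≤ ℓ), d ω * Phi ω θ) ≤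
        Real.exp (-2 * (p + pZ) * ℓ) :=
  stmt4_general m ℓ p pZ hsum hpos d d0 hd hd0
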